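/- Let K, L, and M be positive real numbers and let A be the 3×3 real matrix with rows (K, 1, 1), (1, L, 1), (1, 1, M). Suppose X = diag(x1, x2, x3) is a diagonal matrix with x1, x2, x3 > 0 such that S = X A X is doubly stochastic. Set z = x1². Then the (1,1) entry of S equals K·z, and z satisfies the quartic equation LM(LM − 1) + (−4KL²M² + 4KML + 2LM − L − M)·z + (6K²L²M² − 6K²LM − 2KML² − 2KLM² − 2KML + 3LK + 3KM − 3LM + 2L + 2M − 1)·z² + (−4K³L²M² + 4K³LM + 4K²L²M + 4K²LM² − 2K²LM − 3K²L − 3K²M − 2KML + 2K − L − M + 2)·z³ + (KM − 1)·K·(LK − 1)·(KML − K − L − M + 2)·z⁴ = 0. -/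

import Mathlib

/-!
Write `z = x₁²` and let `u = x₁x₂`, `v = x₁x₃` be the off-diagonal entries of the first row of
`S`. The first row sum reads `u + v = 1 - Kz`; the second and third, multiplied by `z` and with `uv`
eliminated through the first, become `(L - 1)u² + (1 + (1 - K)z)u - z = 0` and the same equation for
`v` with `M` in place of `L`. Substituting `v = 1 - Kz - u` makes `u` a common root of two quadratics,
so their resultant vanishes, and that resultant is exactly the quartic in `z`.
-/

open Finset Matrix

/-- Bézout form of the resultant of two quadratics. -/
theorem sq_sub_eq_mul_of_common_root_of_quadratics {R : Type*} [CommRing R]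
    {a₁ b₁ c₁ a₂ b₂ c₂ u : R}
    (h₁ : a₁ * u ^ 2 + b₁ * u + c₁ = 0) (h₂ : a₂ * u ^ 2 + b₂ * u + c₂ = 0) :
    (a₁ * c₂ - a₂ * c₁) ^ 2 = (a₁ * b₂ - a₂ * b₁) * (b₁ * c₂ - b₂ * c₁) := by
  linear_combination ((a₁ * b₂ - a₂ * b₁) * (b₂ + a₂ * u) - (a₁ * c₂ - a₂ * c₁) * a₂) * h₁
    + ((a₁ * c₂ - a₂ * c₁) * a₁ - (a₁ * b₂ - a₂ * b₁) * (b₁ + a₁ * u)) * h₂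

theorem Matrix.sum_diagonal_mul_mul_diagonal_apply {n R : Type*} [Fintype n] [DecidableEq n]
    [CommSemiring R] (d : n → R) (A : Matrix n n R) (i : n) :
    ∑ j, (diagonal d * A * diagonal d) i j = d i * (A *ᵥ d) i := by
  simp [mul_diagonal, diagonal_mul, mulVec, dotProduct, Finset.mul_sum, mul_assoc]

def sinkhornQuartic {R : Type*} [CommRing R] (K L M z : R) : R :=
    L*M*(L*M - 1)
    + (-4*K*L^2*M^2 + 4*K*M*L + 2*L*M - L - M) * z
    + (6*K^2*L^2*M^2 - 6*K^2*L*M - 2*K*M*L^2 - 2*K*L*M^2 - 2*K*M*L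
        + 3*L*K + 3*K*M - 3*L*M + 2*L + 2*M - 1) * z^2
    + (-4*K^3*L^2*M^2 + 4*K^3*L*M + 4*K^2*L^2*M + 4*K^2*L*M^2
        - 2*K^2*L*M - 3*K^2*L - 3*K^2*M - 2*K*M*L + 2*K - L - M + 2) * z^3
    + (K*M - 1) * K * (L*K - 1) * (K*M*L - K - L - M + 2) * z^4

section
variable {R : Type*} [CommRing R] {K L M z u v : R}

theorem sinkhornQuartic_eq_zero_of_quadratics (hsum : u + v = 1 - K * z)
    (hu : (L - 1) * u ^ 2 + (1 + (1 - K) * z) * u - z = 0)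
    (hv : (M - 1) * v ^ 2 + (1 + (1 - K) * z) * v - z = 0) :
    sinkhornQuartic K L M z = 0 := by
  obtain rfl : v = 1 - K * z - u := by linear_combination hsum
  have hv_quad : (M - 1) * u ^ 2 + -(2 * (M - 1) * (1 - K * z) + (1 + (1 - K) * z)) * u
      + ((M - 1) * (1 - K * z) ^ 2 + (1 + (1 - K) * z) * (1 - K * z) - z) = 0 := by
    linear_combination hv
  have hu_quad : (L - 1) * u ^ 2 + (1 + (1 - K) * z) * u + -z = 0 := by linear_combination hu
  have hres := sq_sub_eq_mul_of_common_root_of_quadratics hu_quad hv_quad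
  unfold sinkhornQuartic
  linear_combination hres

theorem sinkhornQuartic_eq_zero_of_scaling {x₁ x₂ x₃ : R}
    (h₁ : x₁ * (K * x₁ + x₂ + x₃) = 1) (h₂ : x₂ * (x₁ + L * x₂ + x₃) = 1)
    (h₃ : x₃ * (x₁ + x₂ + M * x₃) = 1) :
    sinkhornQuartic K L M (x₁ ^ 2) = 0 :=
  sinkhornQuartic_eq_zero_of_quadratics (u := x₁ * x₂) (v := x₁ * x₃)
    (by linear_combination h₁)
    (by linear_combination x₁ ^ 2 * h₂ - x₁ * x₂ * h₁)
    (by linear_combination x₁ ^ 2 * h₃ - x₁ * x₃ * h₁)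

end

theorem sinkhorn_KLM_matrix_general
    (K L M : ℝ)
    (x1 x2 x3 : ℝ)
    (A : Matrix (Fin 3) (Fin 3) ℝ)
    (hA : A = !![K, 1, 1; 1, L, 1; 1, 1, M])
    (X : Matrix (Fin 3) (Fin 3) ℝ)
    (hX : X = Matrix.diagonal ![x1, x2, x3])
    (S : Matrix (Fin 3) (Fin 3) ℝ)
    (hS : S = X * A * X)
    (hrow : ∀ i, ∑ j, S i j = 1)
    (z : ℝ) (hz : z = x1 ^ 2) :
    S 0 0 = K * z ∧
    L*M*(L*M - 1)
    + (-4*K*L^2*M^2 + 4*K*M*L + 2*L*M - L - M) * z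
    + (6*K^2*L^2*M^2 - 6*K^2*L*M - 2*K*M*L^2 - 2*K*L*M^2 - 2*K*M*L
        + 3*L*K + 3*K*M - 3*L*M + 2*L + 2*M - 1) * z^2
    + (-4*K^3*L^2*M^2 + 4*K^3*L*M + 4*K^2*L^2*M + 4*K^2*L*M^2
        - 2*K^2*L*M - 3*K^2*L - 3*K^2*M - 2*K*M*L + 2*K - L - M + 2) * z^3
    + (K*M - 1) * K * (L*K - 1) * (K*M*L - K - L - M + 2) * z^4 = 0 := by
  subst hA hX hS hz
  have hscaling (i : Fin 3) := (sum_diagonal_mul_mul_diagonal_apply _ _ i).symm.trans (hrow i)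
  have h₁ : x1 * (K * x1 + x2 + x3) = 1 := by
    simpa [mulVec, dotProduct, Fin.sum_univ_three] using hscaling 0
  have h₂ : x2 * (x1 + L * x2 + x3) = 1 := by
    simpa [mulVec, dotProduct, Fin.sum_univ_three] using hscaling 1
  have h₃ : x3 * (x1 + x2 + M * x3) = 1 := by
    simpa [mulVec, dotProduct, Fin.sum_univ_three] using hscaling 2
  refine ⟨?_, sinkhornQuartic_eq_zero_of_scaling h₁ h₂ h₃⟩
  rw [mul_diagonal, diagonal_mul]
  show x1 * K * x1 = K * x1 ^ 2
  ring

theorem sinkhorn_KLM_matrix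
    (K L M : ℝ) (hK : 0 < K) (hL : 0 < L) (hM : 0 < M)
    (x1 x2 x3 : ℝ) (hx1 : 0 < x1) (hx2 : 0 < x2) (hx3 : 0 < x3)
    (A : Matrix (Fin 3) (Fin 3) ℝ)
    (hA : A = !![K, 1, 1; 1, L, 1; 1, 1, M])
    (X : Matrix (Fin 3) (Fin 3) ℝ)
    (hX : X = Matrix.diagonal ![x1, x2, x3])
    (S : Matrix (Fin 3) (Fin 3) ℝ)
    (hS : S = X * A * X)
    (hrow : ∀ i, ∑ j, S i j = 1)
    (hcol : ∀ j, ∑ i, S i j = 1)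
    (z : ℝ) (hz : z = x1 ^ 2) :
    S 0 0 = K * z ∧
    L*M*(L*M - 1)
    + (-4*K*L^2*M^2 + 4*K*M*L + 2*L*M - L - M) * z
    + (6*K^2*L^2*M^2 - 6*K^2*L*M - 2*K*M*L^2 - 2*K*L*M^2 - 2*K*M*L
        + 3*L*K + 3*K*M - 3*L*M + 2*L + 2*M - 1) * z^2
    + (-4*K^3*L^2*M^2 + 4*K^3*L*M + 4*K^2*L^2*M + 4*K^2*L*M^2
        - 2*K^2*L*M - 3*K^2*L - 3*K^2*M - 2*K*M*L + 2*K - L - M + 2) * z^3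
    + (K*M - 1) * K * (L*K - 1) * (K*M*L - K - L - M + 2) * z^4 = 0 :=
  sinkhorn_KLM_matrix_general K L M x1 x2 x3 A hA X hX S hS hrow z hz
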